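/- arXiv:2604.19493 — 2 statements merged into one kernel-verified Lean document; each statement's English description precedes it below -/
import Mathlib

section
/- (Concentration of radial norms, Lemma 1.) Fix β > 0 and for each integer m ≥ 1 let μ_{m,β} be the probability measure on ℝ^m with Lebesgue density [βΓ(m/2) / (π^{m/2} Γ(m/(2β)) 2^{m/(2β)})] exp(−(1/2)‖x‖^{2β}). Then for every ε > 0, μ_{m,β}({x ∈ ℝ^m : |‖x‖ / m^{1/(2β)} − (1/β)^{1/(2β)}| > ε}) → 0 as m → ∞; that is, under X ~ MGGD(0, I_m, β), the normalised radius ‖X‖/m^{1/(2β)} converges in probability to (1/β)^{1/(2β)}. -/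
/-!
Under the density of `MGGD(0, Iₘ, β)`, polar coordinates followed by the substitution
`t = ‖x‖^{2β}` show that `T = ‖X‖^{2β}` has the Gamma law with shape `m/(2β)` and rate `1/2`,
so `T` has mean `m/β` and variance `2m/β`. Chebyshev's inequality then gives
`‖X‖^{2β}/m → 1/β` in probability, and since `r ↦ r^{2β}` is strictly increasing on `[0, ∞)`,
a deviation `ε` of `‖X‖/m^{1/(2β)}` from `(1/β)^{1/(2β)}` forces a deviation `δ(ε) > 0` of
`‖X‖^{2β}/m` from `1/β`.
-/

open MeasureTheory Real Filter Topology
open Set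

/-- The standardised MGGD(0, Iₘ, β) measure on ℝ^m: the measure with Lebesgue density
`[β Γ(m/2) / (π^{m/2} Γ(m/(2β)) 2^{m/(2β)})] exp(−(1/2)‖x‖^{2β})`. -/
noncomputable def mggdStd (m : ℕ) (β : ℝ) : Measure (EuclideanSpace ℝ (Fin m)) :=
  volume.withDensity fun x => ENNReal.ofReal
    (β * Real.Gamma ((m : ℝ) / 2) /
        (Real.pi ^ ((m : ℝ) / 2) * Real.Gamma ((m : ℝ) / (2 * β)) *
          (2 : ℝ) ^ ((m : ℝ) / (2 * β))) *
      Real.exp (-(1 / 2) * ‖x‖ ^ (2 * β)))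

theorem integral_pow_smul_comp_rpow_Ioi {F : Type*} [NormedAddCommGroup F] [NormedSpace ℝ F]
    {n : ℕ} (hn : n ≠ 0) {p : ℝ} (hp : 0 < p) (g : ℝ → F) :
    ∫ y in Ioi 0, y ^ (n - 1) • g (y ^ p) =
      (1 / p) • ∫ t in Ioi 0, t ^ ((n : ℝ) / p - 1) • g t := by
  rw [← integral_comp_rpow_Ioi _ (one_div_ne_zero hp.ne'), ← integral_smul]
  refine setIntegral_congr_fun measurableSet_Ioi fun t (ht : 0 < t) => ?_
  rw [smul_smul, smul_smul, ← rpow_mul ht.le, one_div_mul_cancel hp.ne', rpow_one,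
    abs_of_pos (one_div_pos.2 hp), ← rpow_natCast, ← rpow_mul ht.le, mul_assoc, ← rpow_add ht,
    Nat.cast_pred (Nat.pos_of_ne_zero hn)]
  ring_nf

theorem integral_fun_norm_rpow_euclideanSpace {ι : Type*} [Fintype ι] [Nonempty ι]
    {F : Type*} [NormedAddCommGroup F] [NormedSpace ℝ F] {p : ℝ} (hp : 0 < p) (g : ℝ → F) :
    ∫ x : EuclideanSpace ℝ ι, g (‖x‖ ^ p) =
      (2 * π ^ ((Fintype.card ι : ℝ) / 2) / (p * Gamma ((Fintype.card ι : ℝ) / 2))) •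
        ∫ t in Ioi 0, t ^ ((Fintype.card ι : ℝ) / p - 1) • g t := by
  have hn : (0 : ℝ) < Fintype.card ι := by exact_mod_cast Fintype.card_pos
  rw [integral_fun_norm_addHaar volume (fun y => g (y ^ p)), finrank_euclideanSpace,
    integral_pow_smul_comp_rpow_Ioi Fintype.card_ne_zero hp, measureReal_def,
    EuclideanSpace.volume_ball, ← Nat.cast_smul_eq_nsmul ℝ, smul_smul, smul_smul]
  congr 1
  have hΓ : Gamma (Fintype.card ι / 2 + 1) = Fintype.card ι / 2 * Gamma (Fintype.card ι / 2) :=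
    Gamma_add_one (by positivity)
  have hπ : √π ^ Fintype.card ι = π ^ ((Fintype.card ι : ℝ) / 2) := by
    rw [sqrt_eq_rpow, ← rpow_natCast, ← rpow_mul pi_pos.le]; ring_nf
  have := Gamma_pos_of_pos (show (0:ℝ) < Fintype.card ι / 2 by positivity)
  simp only [ENNReal.ofReal_one, one_pow, one_mul, hΓ, hπ]
  rw [ENNReal.toReal_ofReal (by positivity)]
  field_simp

-- `a / r` and `a / r ^ 2` are the mean and the variance of the Gamma law of shape `a` and rate `r`.
theorem integral_rpow_mul_exp_neg_mul_mul_sq_sub {a r : ℝ} (ha : 0 < a) (hr : 0 < r) :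
    ∫ t in Ioi 0, t ^ (a - 1) * exp (-(r * t)) * (t - a / r) ^ 2 =
      (1 / r) ^ a * Gamma a * (a / r ^ 2) := by
  set f : ℝ → ℝ → ℝ := fun s t => t ^ (s - 1) * exp (-(r * t))
  have integral_f : ∀ s, 0 < s → ∫ t in Ioi 0, f s t = (1 / r) ^ s * Gamma s :=
    fun s hs => integral_rpow_mul_exp_neg_mul_Ioi hs hr
  have integrable_f : ∀ s, 0 < s → IntegrableOn (f s) (Ioi 0) := fun s hs =>
    have := Gamma_pos_of_pos hs
    Integrable.of_integral_ne_zero (by rw [integral_f s hs]; positivity)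
  have expand : EqOn (fun t => t ^ (a - 1) * exp (-(r * t)) * (t - a / r) ^ 2)
      (fun t => f (a + 2) t - 2 * a / r * f (a + 1) t + (a / r) ^ 2 * f a t) (Ioi 0) := by
    intro t (ht : 0 < t)
    simp only [f, show a + 2 - 1 = (a - 1) + 1 + 1 by ring, show a + 1 - 1 = (a - 1) + 1 by ring,
      rpow_add ht, rpow_one]
    ring
  have integrable_sub : IntegrableOn (fun t => f (a + 2) t - 2 * a / r * f (a + 1) t) (Ioi 0) :=
    (integrable_f _ (by positivity)).sub ((integrable_f _ (by positivity)).const_mul _)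
  rw [setIntegral_congr_fun measurableSet_Ioi expand,
    integral_add integrable_sub ((integrable_f _ ha).const_mul _),
    integral_sub (integrable_f _ (by positivity)) ((integrable_f _ (by positivity)).const_mul _),
    integral_const_mul, integral_const_mul, integral_f _ (by positivity),
    integral_f _ (by positivity), integral_f _ ha, Gamma_add_one (by positivity),
    show a + 2 = (a + 1) + 1 by ring, Gamma_add_one (by positivity), Gamma_add_one ha.ne',
    rpow_add (by positivity), rpow_add (by positivity), rpow_one]
  field_simp
  ring

noncomputable def mggdDensity (m : ℕ) (β : ℝ) (x : EuclideanSpace ℝ (Fin m)) : ℝ :=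
  β * Gamma ((m : ℝ) / 2) / (π ^ ((m : ℝ) / 2) * Gamma ((m : ℝ) / (2 * β)) *
    (2 : ℝ) ^ ((m : ℝ) / (2 * β))) * exp (-(1 / 2) * ‖x‖ ^ (2 * β))

theorem mggdStd_eq_withDensity (m : ℕ) (β : ℝ) :
    mggdStd m β = volume.withDensity fun x => ENNReal.ofReal (mggdDensity m β x) := rfl

theorem integral_mggdDensity_mul_sq_sub {m : ℕ} (hm : m ≠ 0) {β : ℝ} (hβ : 0 < β) :
    ∫ x, mggdDensity m β x * (‖x‖ ^ (2 * β) - m / β) ^ 2 = 2 * m / β := by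
  have := NeZero.mk hm
  set a : ℝ := m / (2 * β)
  set K : ℝ := β * Gamma ((m : ℝ) / 2) / (π ^ ((m : ℝ) / 2) * Gamma a * 2 ^ a)
  have hmean : (m : ℝ) / β = a / (1 / 2) := by simp only [a]; field_simp
  have radial : ∀ x : EuclideanSpace ℝ (Fin m),
      mggdDensity m β x * (‖x‖ ^ (2 * β) - m / β) ^ 2 =
        K * (exp (-(1 / 2 * ‖x‖ ^ (2 * β))) * (‖x‖ ^ (2 * β) - a / (1 / 2)) ^ 2) := by
    intro x
    rw [mggdDensity, hmean, neg_mul]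
    ring
  simp_rw [radial]
  rw [integral_const_mul, integral_fun_norm_rpow_euclideanSpace (by positivity)
    (fun t => exp (-(1 / 2 * t)) * (t - a / (1 / 2)) ^ 2), Fintype.card_fin]
  simp_rw [smul_eq_mul, ← mul_assoc]
  rw [integral_rpow_mul_exp_neg_mul_mul_sq_sub (by positivity) (by norm_num)]
  have := Gamma_pos_of_pos (show (0:ℝ) < m / 2 by positivity)
  have := Gamma_pos_of_pos (show (0:ℝ) < a by positivity)
  simp only [K, a]
  field_simp

theorem lintegral_mggdStd_sq_sub {m : ℕ} (hm : m ≠ 0) {β : ℝ} (hβ : 0 < β) :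
    ∫⁻ x, ENNReal.ofReal ((‖x‖ ^ (2 * β) - m / β) ^ 2) ∂mggdStd m β =
      ENNReal.ofReal (2 * m / β) := by
  have := NeZero.mk hm
  have hdensity : ∀ x, 0 ≤ mggdDensity m β x := fun x => by
    have := Gamma_pos_of_pos (show (0:ℝ) < m / 2 by positivity)
    have := Gamma_pos_of_pos (show (0:ℝ) < m / (2 * β) by positivity)
    unfold mggdDensity
    positivity
  have hintegral := integral_mggdDensity_mul_sq_sub hm hβ
  rw [mggdStd_eq_withDensity,
    lintegral_withDensity_eq_lintegral_mul _ (by unfold mggdDensity; fun_prop) (by fun_prop)]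
  simp_rw [Pi.mul_apply, ← ENNReal.ofReal_mul (hdensity _)]
  rw [← ofReal_integral_eq_lintegral_ofReal, hintegral]
  · exact Integrable.of_integral_ne_zero (by rw [hintegral]; positivity)
  · exact ae_of_all _ fun x => mul_nonneg (hdensity x) (sq_nonneg _)

theorem mggdStd_meas_ge_le_div_sq {m : ℕ} (hm : m ≠ 0) {β : ℝ} (hβ : 0 < β) {t : ℝ}
    (ht : 0 < t) :
    mggdStd m β {x | t ≤ |‖x‖ ^ (2 * β) - m / β|} ≤ ENNReal.ofReal (2 * m / β / t ^ 2) :=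
  calc mggdStd m β {x | t ≤ |‖x‖ ^ (2 * β) - m / β|}
      ≤ mggdStd m β
          {x | ENNReal.ofReal (t ^ 2) ≤ ENNReal.ofReal ((‖x‖ ^ (2 * β) - m / β) ^ 2)} :=
        measure_mono fun x (hx : t ≤ _) => ENNReal.ofReal_le_ofReal <| by
          simpa only [sq_abs] using pow_le_pow_left₀ ht.le hx 2
    _ ≤ (∫⁻ x, ENNReal.ofReal ((‖x‖ ^ (2 * β) - m / β) ^ 2) ∂mggdStd m β) /
          ENNReal.ofReal (t ^ 2) :=
        meas_ge_le_lintegral_div (by fun_prop) (by simpa using ht.ne') ENNReal.ofReal_ne_top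
    _ = ENNReal.ofReal (2 * m / β / t ^ 2) := by
        rw [lintegral_mggdStd_sq_sub hm hβ, ← ENNReal.ofReal_div_of_pos (by positivity)]

theorem exists_pos_le_abs_rpow_sub_rpow {p c ε : ℝ} (hp : 0 < p) (hc : 0 < c) (hε : 0 < ε) :
    ∃ δ > 0, ∀ r, 0 ≤ r → ε < |r - c| → δ ≤ |r ^ p - c ^ p| := by
  refine ⟨min ((c + ε) ^ p - c ^ p) (c ^ p - max (c - ε) 0 ^ p),
    lt_min (sub_pos.2 (rpow_lt_rpow hc.le (by linarith) hp))
      (sub_pos.2 (rpow_lt_rpow (le_max_right _ _) (max_lt (by linarith) hc) hp)),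
    fun r hr hrc => ?_⟩
  rcases lt_abs.1 hrc with h | h
  · calc _ ≤ (c + ε) ^ p - c ^ p := min_le_left _ _
      _ ≤ r ^ p - c ^ p := by gcongr; linarith
      _ ≤ |r ^ p - c ^ p| := le_abs_self _
  · calc _ ≤ c ^ p - max (c - ε) 0 ^ p := min_le_right _ _
      _ ≤ c ^ p - r ^ p := by gcongr; exact le_max_of_le_left (by linarith)
      _ ≤ |r ^ p - c ^ p| := by rw [abs_sub_comm]; exact le_abs_self _

/-- Concentration of radial norms, Lemma 1: for fixed `β > 0` and any
`ε > 0`, `μ_{m,β}({x : |‖x‖/m^{1/(2β)} − (1/β)^{1/(2β)}| > ε}) → 0` as `m → ∞`: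
under `X ~ MGGD(0, Iₘ, β)`, `‖X‖/m^{1/(2β)}` converges in probability to `(1/β)^{1/(2β)}`. -/
theorem mggd_norm_concentration
    (β : ℝ) (hβ : 0 < β) (ε : ℝ) (hε : 0 < ε) :
    Tendsto (fun m : ℕ =>
        mggdStd m β {x : EuclideanSpace ℝ (Fin m) |
          ε < |‖x‖ / (m : ℝ) ^ (1 / (2 * β)) - (1 / β) ^ (1 / (2 * β))|})
      atTop (𝓝 0) := by
  obtain ⟨δ, hδ, hδ_le⟩ := exists_pos_le_abs_rpow_sub_rpow (by positivity : 0 < 2 * β)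
    (by positivity : 0 < (1 / β) ^ (1 / (2 * β))) hε
  have bound : ∀ m : ℕ, m ≠ 0 → mggdStd m β {x : EuclideanSpace ℝ (Fin m) |
      ε < |‖x‖ / (m : ℝ) ^ (1 / (2 * β)) - (1 / β) ^ (1 / (2 * β))|} ≤
        ENNReal.ofReal (2 / (β * δ ^ 2) / m) := by
    intro m hm
    have hm' : (0 : ℝ) < m := by positivity
    calc _ ≤ mggdStd m β {x | δ * m ≤ |‖x‖ ^ (2 * β) - m / β|} := measure_mono fun x hx => by
          have := hδ_le _ (by positivity) hx
          rw [div_rpow (norm_nonneg x) (by positivity), one_div (2 * β), rpow_inv_rpow hm'.le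
            (by positivity), rpow_inv_rpow (by positivity) (by positivity)] at this
          calc δ * m ≤ |‖x‖ ^ (2 * β) / m - 1 / β| * m := by gcongr
            _ = |‖x‖ ^ (2 * β) - m / β| := by
              rw [← abs_of_pos hm', ← abs_mul, abs_of_pos hm']
              congr 1
              field_simp
      _ ≤ ENNReal.ofReal (2 * m / β / (δ * m) ^ 2) :=
          mggdStd_meas_ge_le_div_sq hm hβ (by positivity)
      _ = ENNReal.ofReal (2 / (β * δ ^ 2) / m) := by congr 1; field_simp
  have decay : Tendsto (fun m : ℕ => ENNReal.ofReal (2 / (β * δ ^ 2) / m)) atTop (𝓝 0) := by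
    simpa using ENNReal.tendsto_ofReal (tendsto_const_div_atTop_nhds_zero_nat (2 / (β * δ ^ 2)))
  exact tendsto_of_tendsto_of_tendsto_of_le_of_le' tendsto_const_nhds decay
    (Eventually.of_forall fun m => zero_le) (eventually_ne_atTop 0 |>.mono bound)
end

section
/- (Sample-level shell separation.) Fix 0 < β₁ < β₀ and a sample size n ≥ 1. For each integer m ≥ 1, let X_1^{(m)}, …, X_n^{(m)} be i.i.d. with law MGGD(0, I_m, β₀) and, independently, Y_1^{(m)}, …, Y_n^{(m)} be i.i.d. with law MGGD(0, I_m, β₁). Then P(min_{1≤i≤n} ‖Y_i^{(m)}‖ > max_{1≤j≤n} ‖X_j^{(m)}‖) → 1 as m → ∞. -/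
open MeasureTheory Real Filter Topology

open Module Metric Set
open scoped ENNReal

/-! The norm of an `MGGD(0, Iₘ, β)` vector concentrates around `m ^ (1 / 2β)`. Comparing the
density `exp (-‖x‖ ^ 2β / 2)` with `exp (-s ‖x‖ ^ 2β)`, whose integral scales like `s ^ (-m / 2β)`,
gives the Chernoff-type bounds `P(‖X‖ ≥ t) ≤ 2 ^ (m / 2β) exp (-t ^ 2β / 4)` and
`P(‖X‖ ≤ t) ≤ 2 ^ (-m / 2β) exp (t ^ 2β / 2)`. For `β₁ < β < β₀` and `t = m ^ (1 / 2β)` we have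
`t ^ 2β₀ = m ^ (β₀ / β) ≫ m ≫ m ^ (β₁ / β) = t ^ 2β₁`, so both bounds tend to `0`, and a union
bound over the `2n` sample points finishes the proof. -/

theorem tendsto_mul_rpow_sub_mul_rpow_atBot {a b γ δ : ℝ} (hγδ : γ < δ) (hδ : 0 < δ)
    (hb : 0 < b) : Tendsto (fun x : ℝ => a * x ^ γ - b * x ^ δ) atTop atBot := by
  have hfactor : ∀ᶠ x : ℝ in atTop, x ^ δ * (a * x ^ (γ - δ) - b) = a * x ^ γ - b * x ^ δ := by
    filter_upwards [eventually_gt_atTop 0] with x hx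
    rw [mul_sub, mul_left_comm, ← rpow_add hx, add_sub_cancel, mul_comm b]
  refine Tendsto.congr' hfactor (Tendsto.atTop_mul_neg (neg_lt_zero.2 hb)
    (tendsto_rpow_atTop hδ) ?_)
  simpa using ((tendsto_rpow_neg_atTop (sub_pos.2 hγδ)).const_mul a).sub_const b

theorem withDensity_ofReal_le_ofReal_integral {α : Type*} [MeasurableSpace α] {μ : Measure α}
    {f g : α → ℝ} {s : Set α} (hs : MeasurableSet s) (hg : Integrable g μ) (hg_nonneg : 0 ≤ g)
    (hfg : ∀ x ∈ s, f x ≤ g x) :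
    μ.withDensity (fun x => ENNReal.ofReal (f x)) s ≤ ENNReal.ofReal (∫ x, g x ∂μ) := by
  rw [withDensity_apply _ hs, ofReal_integral_eq_lintegral_ofReal hg (ae_of_all _ hg_nonneg)]
  exact (setLIntegral_mono' hs fun x hx => ENNReal.ofReal_le_ofReal (hfg x hx)).trans
    (setLIntegral_le_lintegral _ _)

section GenGaussian

variable {E : Type*} [NormedAddCommGroup E] [NormedSpace ℝ E] [MeasurableSpace E] [BorelSpace E]
  [FiniteDimensional ℝ E] (μ : Measure E) [μ.IsAddHaarMeasure] {p : ℝ}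

theorem integral_exp_neg_mul_norm_rpow (hp : 0 < p) {s : ℝ} (hs : 0 < s) :
    ∫ x, exp (-s * ‖x‖ ^ p) ∂μ =
      μ.real (ball 0 1) * Gamma (finrank ℝ E / p + 1) * s ^ (-(finrank ℝ E / p)) := by
  have hunscaled : ∫ x, exp (-‖x‖ ^ p) ∂μ = μ.real (ball 0 1) * Gamma (finrank ℝ E / p + 1) := by
    rw [measureReal_def, measure_unitBall_eq_integral_div_gamma μ hp,
      ENNReal.toReal_ofReal (div_nonneg (integral_nonneg fun _ => (exp_pos _).le)
        (Gamma_pos_of_pos (by positivity)).le),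
      div_mul_cancel₀ _ (Gamma_pos_of_pos (by positivity)).ne']
  have hscale : ∀ x : E, exp (-s * ‖x‖ ^ p) = exp (-‖s ^ p⁻¹ • x‖ ^ p) := by
    intro x
    rw [norm_smul, norm_of_nonneg (by positivity), mul_rpow (by positivity) (norm_nonneg _),
      rpow_inv_rpow hs.le hp.ne', neg_mul]
  simp_rw [hscale]
  rw [Measure.integral_comp_smul μ (fun x => exp (-‖x‖ ^ p)), hunscaled, smul_eq_mul,
    abs_of_pos (by positivity), ← rpow_natCast, ← rpow_mul hs.le, ← rpow_neg_one,
    ← rpow_mul hs.le]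
  ring_nf

theorem integral_exp_neg_mul_norm_rpow_pos (hp : 0 < p) {s : ℝ} (hs : 0 < s) :
    0 < ∫ x, exp (-s * ‖x‖ ^ p) ∂μ := by
  have hball : 0 < μ.real (ball 0 1) :=
    ENNReal.toReal_pos (measure_ball_pos μ 0 one_pos).ne' measure_ball_lt_top.ne
  rw [integral_exp_neg_mul_norm_rpow μ hp hs]
  have := Gamma_pos_of_pos (show 0 < (finrank ℝ E : ℝ) / p + 1 by positivity)
  positivity

theorem integrable_exp_neg_mul_norm_rpow (hp : 0 < p) {s : ℝ} (hs : 0 < s) :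
    Integrable (fun x => exp (-s * ‖x‖ ^ p)) μ :=
  .of_integral_ne_zero (integral_exp_neg_mul_norm_rpow_pos μ hp hs).ne'

theorem integral_exp_neg_mul_norm_rpow_div (hp : 0 < p) {a b : ℝ} (ha : 0 < a) (hb : 0 < b) :
    (∫ x, exp (-a * ‖x‖ ^ p) ∂μ) / ∫ x, exp (-b * ‖x‖ ^ p) ∂μ = (b / a) ^ (finrank ℝ E / p) := by
  have hK := integral_exp_neg_mul_norm_rpow_pos μ hp one_pos
  rw [integral_exp_neg_mul_norm_rpow μ hp one_pos, one_rpow, mul_one] at hK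
  rw [integral_exp_neg_mul_norm_rpow μ hp ha, integral_exp_neg_mul_norm_rpow μ hp hb,
    mul_div_mul_left _ _ hK.ne', rpow_neg ha.le, rpow_neg hb.le, div_rpow hb.le ha.le]
  field_simp

noncomputable def genGaussianMeasure (p : ℝ) : Measure E :=
  μ.withDensity fun x =>
    ENNReal.ofReal (exp (-(1 / 2) * ‖x‖ ^ p) / ∫ y, exp (-(1 / 2) * ‖y‖ ^ p) ∂μ)

theorem isProbabilityMeasure_genGaussianMeasure (hp : 0 < p) :
    IsProbabilityMeasure (genGaussianMeasure μ p) := by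
  constructor
  rw [genGaussianMeasure, withDensity_apply _ MeasurableSet.univ, Measure.restrict_univ,
    ← ofReal_integral_eq_lintegral_ofReal
      ((integrable_exp_neg_mul_norm_rpow μ hp one_half_pos).div_const _)
      (ae_of_all _ fun _ => by positivity),
    integral_div, div_self (integral_exp_neg_mul_norm_rpow_pos μ hp one_half_pos).ne',
    ENNReal.ofReal_one]

theorem genGaussianMeasure_setOf_le_norm_le (hp : 0 < p) {t : ℝ} (ht : 0 ≤ t) :
    genGaussianMeasure μ p {x | t ≤ ‖x‖} ≤
      ENNReal.ofReal (exp (finrank ℝ E / p * log 2 - t ^ p / 4)) := by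
  set Z := ∫ y, exp (-(1 / 2) * ‖y‖ ^ p) ∂μ
  have hZ : 0 < Z := integral_exp_neg_mul_norm_rpow_pos μ hp one_half_pos
  have hbound : ∀ x ∈ {x : E | t ≤ ‖x‖},
      exp (-(1 / 2) * ‖x‖ ^ p) / Z ≤ exp (-(t ^ p / 4)) * exp (-(1 / 4) * ‖x‖ ^ p) / Z := by
    intro x hx
    have : t ^ p ≤ ‖x‖ ^ p := rpow_le_rpow ht hx hp.le
    rw [← exp_add]
    gcongr
    linarith
  calc genGaussianMeasure μ p {x | t ≤ ‖x‖}
      ≤ ENNReal.ofReal (∫ x, exp (-(t ^ p / 4)) * exp (-(1 / 4) * ‖x‖ ^ p) / Z ∂μ) :=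
        withDensity_ofReal_le_ofReal_integral (measurableSet_le measurable_const measurable_norm)
          (((integrable_exp_neg_mul_norm_rpow μ hp (by norm_num)).const_mul _).div_const _)
          (fun _ => by positivity) hbound
    _ = ENNReal.ofReal (exp (-(t ^ p / 4)) * ((1 / 2) / (1 / 4)) ^ (finrank ℝ E / p)) := by
        rw [integral_div, integral_const_mul, mul_div_assoc,
          integral_exp_neg_mul_norm_rpow_div μ hp (by norm_num) (by norm_num)]
    _ = ENNReal.ofReal (exp (finrank ℝ E / p * log 2 - t ^ p / 4)) := by
        rw [rpow_def_of_pos (by norm_num : (0 : ℝ) < 1 / 2 / (1 / 4)), ← exp_add]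
        norm_num
        ring_nf

theorem genGaussianMeasure_setOf_norm_le_le (hp : 0 < p) (t : ℝ) :
    genGaussianMeasure μ p {x | ‖x‖ ≤ t} ≤
      ENNReal.ofReal (exp (t ^ p / 2 - finrank ℝ E / p * log 2)) := by
  set Z := ∫ y, exp (-(1 / 2) * ‖y‖ ^ p) ∂μ
  have hZ : 0 < Z := integral_exp_neg_mul_norm_rpow_pos μ hp one_half_pos
  have hbound : ∀ x ∈ {x : E | ‖x‖ ≤ t},
      exp (-(1 / 2) * ‖x‖ ^ p) / Z ≤ exp (t ^ p / 2) * exp (-1 * ‖x‖ ^ p) / Z := by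
    intro x hx
    have : ‖x‖ ^ p ≤ t ^ p := rpow_le_rpow (norm_nonneg x) hx hp.le
    rw [← exp_add]
    gcongr
    linarith
  calc genGaussianMeasure μ p {x | ‖x‖ ≤ t}
      ≤ ENNReal.ofReal (∫ x, exp (t ^ p / 2) * exp (-1 * ‖x‖ ^ p) / Z ∂μ) :=
        withDensity_ofReal_le_ofReal_integral (measurableSet_le measurable_norm measurable_const)
          (((integrable_exp_neg_mul_norm_rpow μ hp one_pos).const_mul _).div_const _)
          (fun _ => by positivity) hbound
    _ = ENNReal.ofReal (exp (t ^ p / 2) * ((1 / 2) / 1) ^ (finrank ℝ E / p)) := by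
        rw [integral_div, integral_const_mul, mul_div_assoc,
          integral_exp_neg_mul_norm_rpow_div μ hp one_pos one_half_pos]
    _ = ENNReal.ofReal (exp (t ^ p / 2 - finrank ℝ E / p * log 2)) := by
        rw [div_one, rpow_def_of_pos one_half_pos, one_div, log_inv, ← exp_add]
        ring_nf

end GenGaussian

theorem one_sub_le_measure_forall_lt {α ι κ : Type*} [MeasurableSpace α] [Fintype ι] [Fintype κ]
    (μ ν : Measure α) [IsProbabilityMeasure μ] [IsProbabilityMeasure ν] {f : α → ℝ}
    (hf : Measurable f) (t : ℝ) :
    1 - (Fintype.card ι * μ {x | t ≤ f x} + Fintype.card κ * ν {x | f x ≤ t}) ≤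
      ((Measure.pi fun _ : ι => μ).prod (Measure.pi fun _ : κ => ν))
        {q | ∀ i j, f (q.1 j) < f (q.2 i)} := by
  set P := (Measure.pi fun _ : ι => μ).prod (Measure.pi fun _ : κ => ν)
  set A := {q : (ι → α) × (κ → α) | ∀ i j, f (q.1 j) < f (q.2 i)}
  have hcover : Aᶜ ⊆ (⋃ j, {q | t ≤ f (q.1 j)}) ∪ ⋃ i, {q | f (q.2 i) ≤ t} := by
    intro q hq
    simp only [A, mem_compl_iff, mem_ofPred_eq, not_forall, not_lt] at hq
    obtain ⟨i, j, hji⟩ := hq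
    rcases le_total t (f (q.1 j)) with htj | hjt
    · exact Or.inl (mem_iUnion.2 ⟨j, htj⟩)
    · exact Or.inr (mem_iUnion.2 ⟨i, hji.trans hjt⟩)
  have hfst : ∀ j, P {q | t ≤ f (q.1 j)} = μ {x | t ≤ f x} := fun j =>
    ((measurePreserving_eval (fun _ : ι => μ) j).comp
      (measurePreserving_fst (ν := Measure.pi fun _ : κ => ν))).measure_preimage
      (measurableSet_le measurable_const hf).nullMeasurableSet
  have hsnd : ∀ i, P {q | f (q.2 i) ≤ t} = ν {x | f x ≤ t} := fun i =>
    ((measurePreserving_eval (fun _ : κ => ν) i).comp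
      (measurePreserving_snd (μ := Measure.pi fun _ : ι => μ))).measure_preimage
      (measurableSet_le hf measurable_const).nullMeasurableSet
  have hcompl : P Aᶜ ≤ Fintype.card ι * μ {x | t ≤ f x} + Fintype.card κ * ν {x | f x ≤ t} :=
    calc P Aᶜ ≤ P (⋃ j, {q | t ≤ f (q.1 j)}) + P (⋃ i, {q | f (q.2 i) ≤ t}) :=
          (measure_mono hcover).trans (measure_union_le _ _)
      _ ≤ (∑ j, P {q | t ≤ f (q.1 j)}) + ∑ i, P {q | f (q.2 i) ≤ t} :=
          add_le_add (measure_iUnion_fintype_le _ _) (measure_iUnion_fintype_le _ _)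
      _ = _ := by simp [hfst, hsnd]
  calc _ ≤ 1 - P Aᶜ := tsub_le_tsub_left hcompl 1
    _ ≤ P A := tsub_le_iff_right.2 (by simpa using measure_univ_le_add_compl A (μ := P))

theorem mggdStd_eq_genGaussianMeasure {m : ℕ} (hm : 1 ≤ m) {β : ℝ} (hβ : 0 < β) :
    mggdStd m β = genGaussianMeasure volume (2 * β) := by
  have : Nonempty (Fin m) := ⟨⟨0, hm⟩⟩
  have hZ := integral_exp_neg_mul_norm_rpow (volume : Measure (EuclideanSpace ℝ (Fin m)))
    (by positivity : 0 < 2 * β) one_half_pos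
  rw [measureReal_def, EuclideanSpace.volume_ball, finrank_euclideanSpace_fin] at hZ
  simp only [Fintype.card_fin, ENNReal.ofReal_one, one_pow, one_mul] at hZ
  have hsqrt : √π ^ m = π ^ ((m : ℝ) / 2) := by
    rw [sqrt_eq_rpow, ← rpow_natCast, ← rpow_mul pi_pos.le, one_div_mul_eq_div]
  have hhalf : ((1 : ℝ) / 2) ^ (-((m : ℝ) / (2 * β))) = 2 ^ ((m : ℝ) / (2 * β)) := by
    rw [one_div, inv_rpow zero_le_two, rpow_neg zero_le_two, inv_inv]
  unfold mggdStd genGaussianMeasure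
  congr 1 with x
  rw [hZ, ENNReal.toReal_ofReal (by positivity), hsqrt, hhalf,
    Gamma_add_one (by positivity), Gamma_add_one (by positivity)]
  have := Gamma_pos_of_pos (by positivity : (0 : ℝ) < m / 2)
  have := Gamma_pos_of_pos (by positivity : (0 : ℝ) < m / (2 * β))
  field_simp

theorem isProbabilityMeasure_mggdStd {m : ℕ} (hm : 1 ≤ m) {β : ℝ} (hβ : 0 < β) :
    IsProbabilityMeasure (mggdStd m β) := by
  rw [mggdStd_eq_genGaussianMeasure hm hβ]
  exact isProbabilityMeasure_genGaussianMeasure _ (by positivity)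

theorem one_sub_le_mggdStd_sample_separation {m : ℕ} (hm : 1 ≤ m) {β₀ β₁ : ℝ} (hβ₀ : 0 < β₀)
    (hβ₁ : 0 < β₁) (n : ℕ) {t : ℝ} (ht : 0 ≤ t) :
    1 - (n * ENNReal.ofReal (exp ((m : ℝ) / (2 * β₀) * log 2 - t ^ (2 * β₀) / 4)) +
        n * ENNReal.ofReal (exp (t ^ (2 * β₁) / 2 - (m : ℝ) / (2 * β₁) * log 2))) ≤
      ((Measure.pi fun _ : Fin n => mggdStd m β₀).prod (Measure.pi fun _ : Fin n => mggdStd m β₁))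
        {q | ∀ i j : Fin n, ‖q.1 j‖ < ‖q.2 i‖} := by
  have := isProbabilityMeasure_mggdStd hm hβ₀
  have := isProbabilityMeasure_mggdStd hm hβ₁
  refine le_trans ?_ (one_sub_le_measure_forall_lt _ _ measurable_norm t)
  have hX := genGaussianMeasure_setOf_le_norm_le (volume : Measure (EuclideanSpace ℝ (Fin m)))
    (by positivity : 0 < 2 * β₀) ht
  have hY := genGaussianMeasure_setOf_norm_le_le (volume : Measure (EuclideanSpace ℝ (Fin m)))
    (by positivity : 0 < 2 * β₁) t
  rw [finrank_euclideanSpace_fin, ← mggdStd_eq_genGaussianMeasure hm hβ₀] at hX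
  rw [finrank_euclideanSpace_fin, ← mggdStd_eq_genGaussianMeasure hm hβ₁] at hY
  simp only [Fintype.card_fin]
  gcongr

theorem ENNReal.tendsto_ofReal_exp_of_tendsto_atBot {α : Type*} {l : Filter α} {f : α → ℝ}
    (hf : Tendsto f l atBot) : Tendsto (fun x => ENNReal.ofReal (exp (f x))) l (𝓝 0) := by
  simpa using ENNReal.tendsto_ofReal (tendsto_exp_atBot.comp hf)

theorem tendsto_mggd_shell_error {β₀ β β₁ : ℝ} (hβ₁ : 0 < β₁) (hβ₁β : β₁ < β) (hββ₀ : β < β₀)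
    (n : ℕ) :
    Tendsto (fun m : ℕ =>
      (n : ℝ≥0∞) * ENNReal.ofReal
          (exp ((m : ℝ) / (2 * β₀) * log 2 - ((m : ℝ) ^ (2 * β)⁻¹) ^ (2 * β₀) / 4)) +
        n * ENNReal.ofReal
          (exp (((m : ℝ) ^ (2 * β)⁻¹) ^ (2 * β₁) / 2 - (m : ℝ) / (2 * β₁) * log 2)))
      atTop (𝓝 0) := by
  have hβ : 0 < β := hβ₁.trans hβ₁β
  have hβ₀ : 0 < β₀ := hβ.trans hββ₀
  have hr : ∀ (m : ℕ) q, ((m : ℝ) ^ (2 * β)⁻¹) ^ (2 * q) = (m : ℝ) ^ (q / β) := fun m q => by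
    rw [← rpow_mul (Nat.cast_nonneg m)]
    field_simp
  have hX : Tendsto (fun m : ℕ =>
      (m : ℝ) / (2 * β₀) * log 2 - ((m : ℝ) ^ (2 * β)⁻¹) ^ (2 * β₀) / 4) atTop atBot :=
    ((tendsto_mul_rpow_sub_mul_rpow_atBot (a := log 2 / (2 * β₀)) (b := 1 / 4) (δ := β₀ / β)
      ((one_lt_div hβ).2 hββ₀) (by positivity) (by norm_num)).comp
        tendsto_natCast_atTop_atTop).congr fun m => by
    simp only [Function.comp_apply, rpow_one, hr]
    ring
  have hY : Tendsto (fun m : ℕ =>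
      ((m : ℝ) ^ (2 * β)⁻¹) ^ (2 * β₁) / 2 - (m : ℝ) / (2 * β₁) * log 2) atTop atBot :=
    ((tendsto_mul_rpow_sub_mul_rpow_atBot (a := 1 / 2) (b := log 2 / (2 * β₁)) (γ := β₁ / β)
      (δ := 1) ((div_lt_one hβ).2 hβ₁β) one_pos (by positivity)).comp
        tendsto_natCast_atTop_atTop).congr fun m => by
    simp only [Function.comp_apply, rpow_one, hr]
    ring
  simpa using (ENNReal.Tendsto.const_mul (ENNReal.tendsto_ofReal_exp_of_tendsto_atBot hX)
    (Or.inr (ENNReal.natCast_ne_top n))).add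
      (ENNReal.Tendsto.const_mul (ENNReal.tendsto_ofReal_exp_of_tendsto_atBot hY)
        (Or.inr (ENNReal.natCast_ne_top n)))

theorem mggd_sample_shell_separation_general
    (β₀ β₁ : ℝ) (hβ₁ : 0 < β₁) (h : β₁ < β₀) (n : ℕ) :
    Tendsto (fun m : ℕ =>
        ((Measure.pi fun _ : Fin n => mggdStd m β₀).prod
            (Measure.pi fun _ : Fin n => mggdStd m β₁))
          {p : (Fin n → EuclideanSpace ℝ (Fin m)) × (Fin n → EuclideanSpace ℝ (Fin m)) |
            ∀ i j : Fin n, ‖p.1 j‖ < ‖p.2 i‖})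
      atTop (𝓝 1) := by
  have hβ₀ : 0 < β₀ := hβ₁.trans h
  obtain ⟨β, hβ₁β, hββ₀⟩ := exists_between h
  have hlower := ENNReal.Tendsto.sub tendsto_const_nhds
    (tendsto_mggd_shell_error hβ₁ hβ₁β hββ₀ n) (Or.inl ENNReal.one_ne_top)
  rw [tsub_zero] at hlower
  refine tendsto_of_tendsto_of_tendsto_of_le_of_le' hlower tendsto_const_nhds ?_ ?_
  · filter_upwards [eventually_ge_atTop 1] with m hm
    exact one_sub_le_mggdStd_sample_separation hm hβ₀ hβ₁ n (by positivity)
  · filter_upwards [eventually_ge_atTop 1] with m hm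
    have := isProbabilityMeasure_mggdStd hm hβ₀
    have := isProbabilityMeasure_mggdStd hm hβ₁
    exact prob_le_one

/-- Sample-level shell separation: fix `0 < β₁ < β₀` and `n ≥ 1`. For each
`m`, let `X₁,…,Xₙ` be i.i.d. `MGGD(0, Iₘ, β₀)` and, independently, `Y₁,…,Yₙ` be i.i.d.
`MGGD(0, Iₘ, β₁)` (joint law the product of the two i.i.d. product measures). Then
`P(min_i ‖Yᵢ‖ > max_j ‖Xⱼ‖) → 1` as `m → ∞`. -/
theorem mggd_sample_shell_separation
    (β₀ β₁ : ℝ) (hβ₁ : 0 < β₁) (h : β₁ < β₀) (n : ℕ) (hn : 1 ≤ n) :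
    Tendsto (fun m : ℕ =>
        ((Measure.pi fun _ : Fin n => mggdStd m β₀).prod
            (Measure.pi fun _ : Fin n => mggdStd m β₁))
          {p : (Fin n → EuclideanSpace ℝ (Fin m)) × (Fin n → EuclideanSpace ℝ (Fin m)) |
            ∀ i j : Fin n, ‖p.1 j‖ < ‖p.2 i‖})
      atTop (𝓝 1) :=
  mggd_sample_shell_separation_general β₀ β₁ hβ₁ h n
end
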